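/- Define L(a,σ,w) for positive parameters a₀,σ₀,w₀ and a,σ,w > 0 by L = P w² σ₀² w₀² (2a + P w²)/(4a₀(a + P w²)(a + a₀ + P w²)) − P² w⁴/(4(a + P w²)), where P = P(a,σ,w) = (√(a² + w²σ²) − a)/w². Then the set of critical points of L (i.e. points where the gradient of L vanishes) is exactly {(a₀, σ, w₀σ₀/σ) : σ > 0}. -/

import Mathlib

/-!
Write `κ = σ₀²w₀²`, `c = w²σ²` and `s = √(a² + c)`. Since `P w² = s - a`, the likelihood is a
function `reducedLikelihood a₀ κ a c` of `a` and `c` alone. As `∂c/∂σ` and `∂c/∂w` do not vanish,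
the gradient in `(a, σ, w)` vanishes iff both partial derivatives in `(a, c)` do. Clearing
denominators and substituting `c = s² - a²`, a polynomial combination of the two equations is
`(a₀ - a) · 2a₀s³(s - a)²(s + a₀)² = 0`, which forces `a = a₀` (as `s > |a|`); the `c`-equation
then reduces to `κ = c`, i.e. `wσ = w₀σ₀`.
-/

/-- Steady-state Kalman-Bucy filter variance. -/
noncomputable def Pst (a σ w : ℝ) : ℝ := (Real.sqrt (a ^ 2 + w ^ 2 * σ ^ 2) - a) / w ^ 2

/-- Asymptotic incomplete-data log-likelihood of the linear-Gaussian model (Eq. 29). -/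
noncomputable def Lfun (a₀ σ₀ w₀ a σ w : ℝ) : ℝ :=
  Pst a σ w * w ^ 2 * σ₀ ^ 2 * w₀ ^ 2 * (2 * a + Pst a σ w * w ^ 2) /
      (4 * a₀ * (a + Pst a σ w * w ^ 2) * (a + a₀ + Pst a σ w * w ^ 2)) -
    (Pst a σ w) ^ 2 * w ^ 4 / (4 * (a + Pst a σ w * w ^ 2))

open Real Filter Topology

section

variable {𝕜 F : Type*} [NontriviallyNormedField 𝕜] [NormedAddCommGroup F] [NormedSpace 𝕜 F]

theorem fderiv_eq_zero_iff_of_hasDerivAt_coord {f : 𝕜 × 𝕜 × 𝕜 → F} {x y z : 𝕜} {dx dy dz : F}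
    (hf : DifferentiableAt 𝕜 f (x, y, z)) (hx : HasDerivAt (fun t => f (t, y, z)) dx x)
    (hy : HasDerivAt (fun t => f (x, t, z)) dy y) (hz : HasDerivAt (fun t => f (x, y, t)) dz z) :
    fderiv 𝕜 f (x, y, z) = 0 ↔ dx = 0 ∧ dy = 0 ∧ dz = 0 := by
  have ex : fderiv 𝕜 f (x, y, z) (1, 0, 0) = dx :=
    (hf.hasFDerivAt.comp_hasDerivAt x
      ((hasDerivAt_id x).prodMk ((hasDerivAt_const x y).prodMk (hasDerivAt_const x z)))).unique hx
  have ey : fderiv 𝕜 f (x, y, z) (0, 1, 0) = dy :=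
    (hf.hasFDerivAt.comp_hasDerivAt y
      ((hasDerivAt_const y x).prodMk ((hasDerivAt_id y).prodMk (hasDerivAt_const y z)))).unique hy
  have ez : fderiv 𝕜 f (x, y, z) (0, 0, 1) = dz :=
    (hf.hasFDerivAt.comp_hasDerivAt z
      ((hasDerivAt_const z x).prodMk ((hasDerivAt_const z y).prodMk (hasDerivAt_id z)))).unique hz
  rw [← ex, ← ey, ← ez]
  constructor
  · intro h
    simp [h]
  · rintro ⟨h₁, h₂, h₃⟩
    refine ContinuousLinearMap.ext fun v => ?_
    calc fderiv 𝕜 f (x, y, z) v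
        = fderiv 𝕜 f (x, y, z) (v.1 • (1, 0, 0) + v.2.1 • (0, 1, 0) + v.2.2 • (0, 0, 1)) := by
          congr 1; ext <;> simp
      _ = 0 := by simp only [map_add, map_smul, h₁, h₂, h₃, smul_zero, add_zero]

end

noncomputable def reducedLikelihood (a₀ κ a c : ℝ) : ℝ :=
  κ * c / (4 * a₀ * √(a ^ 2 + c) * (√(a ^ 2 + c) + a₀)) -
    (√(a ^ 2 + c) - a) ^ 2 / (4 * √(a ^ 2 + c))

theorem Lfun_eq_reducedLikelihood (a₀ σ₀ w₀ a σ : ℝ) {w : ℝ} (hw : w ≠ 0) :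
    Lfun a₀ σ₀ w₀ a σ w = reducedLikelihood a₀ (σ₀ ^ 2 * w₀ ^ 2) a (w ^ 2 * σ ^ 2) := by
  have hP : Pst a σ w * w ^ 2 = √(a ^ 2 + w ^ 2 * σ ^ 2) - a :=
    div_mul_cancel₀ _ (pow_ne_zero 2 hw)
  have hs : √(a ^ 2 + w ^ 2 * σ ^ 2) ^ 2 = a ^ 2 + w ^ 2 * σ ^ 2 := sq_sqrt (by positivity)
  rw [Lfun, show Pst a σ w ^ 2 * w ^ 4 = (Pst a σ w * w ^ 2) ^ 2 by ring, hP, reducedLikelihood]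
  congr 1
  · congr 1
    · linear_combination σ₀ ^ 2 * w₀ ^ 2 * hs
    · ring
  · ring

theorem critical_equations_iff {a₀ κ a c s : ℝ} (ha₀ : 0 < a₀) (hs₀ : 0 < s) (has : a < s)
    (hs : s ^ 2 = a ^ 2 + c) :
    (a₀ * (s + a₀) ^ 2 * (s - a) ^ 2 * (2 * s + a) - κ * c * a * (2 * s + a₀) = 0 ∧
        κ * (2 * s ^ 2 * (s + a₀) - c * (2 * s + a₀)) - a₀ * (s + a₀) ^ 2 * (s - a) * (s + a) = 0) ↔
      a = a₀ ∧ κ = c := by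
  obtain rfl : c = s ^ 2 - a ^ 2 := by linarith
  constructor
  · rintro ⟨hA, hC⟩
    have key : (a₀ - a) * (2 * s ^ 3 * a₀ * (s - a) ^ 2 * (s + a₀) ^ 2) = 0 := by
      linear_combination (a₀ * (s ^ 2 + a ^ 2) + 2 * a ^ 2 * s) * hA +
        (a * (s ^ 2 - a ^ 2) * (2 * s + a₀)) * hC
    have hpos : 0 < 2 * s ^ 3 * a₀ * (s - a) ^ 2 * (s + a₀) ^ 2 := by
      have : 0 < s - a := sub_pos.2 has
      positivity
    obtain rfl : a = a₀ := by
      linarith [(mul_eq_zero.1 key).resolve_right hpos.ne']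
    refine ⟨rfl, ?_⟩
    have hκ : (κ - (s ^ 2 - a ^ 2)) * (a * (s + a) ^ 2) = 0 := by linear_combination hC
    have : 0 < a * (s + a) ^ 2 := by positivity
    linarith [(mul_eq_zero.1 hκ).resolve_right this.ne']
  · rintro ⟨rfl, rfl⟩
    constructor <;> ring

section

variable {a₀ κ a c : ℝ}

theorem hasDerivAt_reducedLikelihood_left (ha₀ : 0 < a₀) (hac : 0 < a ^ 2 + c) :
    HasDerivAt (fun t => reducedLikelihood a₀ κ t c)
      ((a₀ * (√(a ^ 2 + c) + a₀) ^ 2 * (√(a ^ 2 + c) - a) ^ 2 * (2 * √(a ^ 2 + c) + a) -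
          κ * c * a * (2 * √(a ^ 2 + c) + a₀)) /
        (4 * a₀ * √(a ^ 2 + c) ^ 3 * (√(a ^ 2 + c) + a₀) ^ 2)) a := by
  have hs : HasDerivAt (fun t => √(t ^ 2 + c)) (2 * a / (2 * √(a ^ 2 + c))) a := by
    simpa using ((hasDerivAt_pow 2 a).add_const c).sqrt hac.ne'
  have hs₀ : 0 < √(a ^ 2 + c) := sqrt_pos.2 hac
  have hden₁ : 4 * a₀ * √(a ^ 2 + c) * (√(a ^ 2 + c) + a₀) ≠ 0 := by positivity
  have hden₂ : 4 * √(a ^ 2 + c) ≠ 0 := by positivity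
  refine (((hasDerivAt_const a (κ * c)).div ((hs.const_mul (4 * a₀)).mul (hs.add_const a₀))
    hden₁).sub (((hs.sub (hasDerivAt_id a)).pow 2).div (hs.const_mul 4) hden₂)).congr_deriv ?_
  simp only [Pi.mul_apply, Pi.sub_apply, Pi.pow_apply, id]
  field_simp
  ring

theorem hasDerivAt_reducedLikelihood_right (ha₀ : 0 < a₀) (hac : 0 < a ^ 2 + c) :
    HasDerivAt (fun t => reducedLikelihood a₀ κ a t)
      ((κ * (2 * √(a ^ 2 + c) ^ 2 * (√(a ^ 2 + c) + a₀) - c * (2 * √(a ^ 2 + c) + a₀)) -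
          a₀ * (√(a ^ 2 + c) + a₀) ^ 2 * (√(a ^ 2 + c) - a) * (√(a ^ 2 + c) + a)) /
        (8 * a₀ * √(a ^ 2 + c) ^ 3 * (√(a ^ 2 + c) + a₀) ^ 2)) c := by
  have hs : HasDerivAt (fun t => √(a ^ 2 + t)) (1 / (2 * √(a ^ 2 + c))) c := by
    simpa using ((hasDerivAt_id c).const_add (a ^ 2)).sqrt hac.ne'
  have hs₀ : 0 < √(a ^ 2 + c) := sqrt_pos.2 hac
  have hden₁ : 4 * a₀ * √(a ^ 2 + c) * (√(a ^ 2 + c) + a₀) ≠ 0 := by positivity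
  have hden₂ : 4 * √(a ^ 2 + c) ≠ 0 := by positivity
  refine ((((hasDerivAt_id c).const_mul κ).div ((hs.const_mul (4 * a₀)).mul (hs.add_const a₀))
    hden₁).sub (((hs.sub_const a).pow 2).div (hs.const_mul 4) hden₂)).congr_deriv ?_
  simp only [Pi.mul_apply, Pi.pow_apply, id]
  field_simp
  ring

theorem differentiableAt_reducedLikelihood (ha₀ : 0 < a₀) (hac : 0 < a ^ 2 + c) :
    DifferentiableAt ℝ (fun q : ℝ × ℝ => reducedLikelihood a₀ κ q.1 q.2) (a, c) := by
  have hs₀ : 0 < √(a ^ 2 + c) := sqrt_pos.2 hac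
  unfold reducedLikelihood
  fun_prop (disch := positivity)

theorem reducedLikelihood_critical_iff (ha₀ : 0 < a₀) (hc : 0 < c) :
    (deriv (fun t => reducedLikelihood a₀ κ t c) a = 0 ∧
        deriv (fun t => reducedLikelihood a₀ κ a t) c = 0) ↔ a = a₀ ∧ κ = c := by
  have hac : 0 < a ^ 2 + c := by positivity
  have hs₀ : 0 < √(a ^ 2 + c) := sqrt_pos.2 hac
  rw [(hasDerivAt_reducedLikelihood_left ha₀ hac).deriv,
    (hasDerivAt_reducedLikelihood_right ha₀ hac).deriv, div_eq_zero_iff, div_eq_zero_iff,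
    or_iff_left (by positivity), or_iff_left (by positivity)]
  exact critical_equations_iff ha₀ hs₀ (lt_sqrt_of_sq_lt (by linarith)) (sq_sqrt hac.le)

end

theorem stmt4_general (a₀ σ₀ w₀ : ℝ) (ha₀ : 0 < a₀) (hσ₀ : 0 < σ₀) (hw₀ : 0 < w₀)
    (a σ w : ℝ) (hσ : 0 < σ) (hw : 0 < w) :
    fderiv ℝ (fun p : ℝ × ℝ × ℝ => Lfun a₀ σ₀ w₀ p.1 p.2.1 p.2.2) (a, σ, w) = 0 ↔
      (a = a₀ ∧ w * σ = w₀ * σ₀) := by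
  set κ := σ₀ ^ 2 * w₀ ^ 2
  have hc : 0 < w ^ 2 * σ ^ 2 := by positivity
  have hac : 0 < a ^ 2 + w ^ 2 * σ ^ 2 := by positivity
  have hne : ∀ᶠ p : ℝ × ℝ × ℝ in 𝓝 (a, σ, w), p.2.2 ≠ 0 :=
    (continuous_snd.comp continuous_snd).continuousAt.eventually_ne hw.ne'
  have hL : (fun p : ℝ × ℝ × ℝ => Lfun a₀ σ₀ w₀ p.1 p.2.1 p.2.2) =ᶠ[𝓝 (a, σ, w)]
      fun p => reducedLikelihood a₀ κ p.1 (p.2.2 ^ 2 * p.2.1 ^ 2) :=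
    hne.mono fun p hp => Lfun_eq_reducedLikelihood _ _ _ _ _ hp
  have hdiff : DifferentiableAt ℝ (fun p : ℝ × ℝ × ℝ => reducedLikelihood a₀ κ p.1
      (p.2.2 ^ 2 * p.2.1 ^ 2)) (a, σ, w) :=
    (differentiableAt_reducedLikelihood ha₀ hac).comp (a, σ, w)
      (f := fun p : ℝ × ℝ × ℝ => (p.1, p.2.2 ^ 2 * p.2.1 ^ 2)) (by fun_prop)
  have hA := (hasDerivAt_reducedLikelihood_left (κ := κ) ha₀ hac).differentiableAt.hasDerivAt
  have hC := (hasDerivAt_reducedLikelihood_right (κ := κ) ha₀ hac).differentiableAt.hasDerivAt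
  have hS : HasDerivAt (fun t => reducedLikelihood a₀ κ a (w ^ 2 * t ^ 2))
      (deriv (fun t => reducedLikelihood a₀ κ a t) (w ^ 2 * σ ^ 2) * (w ^ 2 * (2 * σ))) σ :=
    hC.comp_of_eq σ (by simpa using (hasDerivAt_pow 2 σ).const_mul (w ^ 2)) (by ring)
  have hW : HasDerivAt (fun t => reducedLikelihood a₀ κ a (t ^ 2 * σ ^ 2))
      (deriv (fun t => reducedLikelihood a₀ κ a t) (w ^ 2 * σ ^ 2) * (2 * w * σ ^ 2)) w :=
    hC.comp_of_eq w (by simpa using (hasDerivAt_pow 2 w).mul_const (σ ^ 2)) (by ring)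
  rw [hL.fderiv_eq, fderiv_eq_zero_iff_of_hasDerivAt_coord hdiff hA hS hW,
    mul_eq_zero_iff_right (by positivity), mul_eq_zero_iff_right (by positivity), and_self,
    reducedLikelihood_critical_iff ha₀ hc, show κ = (w₀ * σ₀) ^ 2 by ring,
    show w ^ 2 * σ ^ 2 = (w * σ) ^ 2 by ring, sq_eq_sq₀ (by positivity) (by positivity),
    eq_comm (a := w₀ * σ₀)]

/-- The set of critical points of the asymptotic likelihood `L` in the positive octant
is exactly `{(a₀, σ, w₀σ₀/σ) : σ > 0}`, i.e. the gradient vanishes iff `a = a₀` and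
`w·σ = w₀·σ₀`. -/
theorem stmt4 (a₀ σ₀ w₀ : ℝ) (ha₀ : 0 < a₀) (hσ₀ : 0 < σ₀) (hw₀ : 0 < w₀)
    (a σ w : ℝ) (ha : 0 < a) (hσ : 0 < σ) (hw : 0 < w) :
    fderiv ℝ (fun p : ℝ × ℝ × ℝ => Lfun a₀ σ₀ w₀ p.1 p.2.1 p.2.2) (a, σ, w) = 0 ↔
      (a = a₀ ∧ w * σ = w₀ * σ₀) :=
  stmt4_general a₀ σ₀ w₀ ha₀ hσ₀ hw₀ a σ w hσ hw
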